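/- Let G be a claw-free graph that is minimally nonperfectly divisible, and let v ∈ V(G). Then the subgraph of G induced on the set M(v) of non-neighbors of v contains no induced antihole of odd length at least 7 (i.e., no complement of an odd cycle of length ≥ 7). -/

import Mathlib

open SimpleGraph

variable {V : Type}

/-- The clique number of the subgraph of `G` induced on `S`. -/
noncomputable def omegaOn (G : SimpleGraph V) (S : Set V) : ℕ :=
  sSup {n | ∃ s : Finset V, ↑s ⊆ S ∧ G.IsNClique n s}

/-- The subgraph of `G` induced on `S` is a perfect graph. -/
def IsPerfectOn (G : SimpleGraph V) (S : Set V) : Prop :=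
  ∀ T : Set V, T ⊆ S → (G.induce T).chromaticNumber = (omegaOn G T : ℕ∞)

/-- Every nonempty induced subgraph of `G[S]` admits a perfect division. -/
def PerfDivOn (G : SimpleGraph V) (S : Set V) : Prop :=
  ∀ H : Set V, H ⊆ S → H.Nonempty →
    ∃ A B : Set V, A ∪ B = H ∧ Disjoint A B ∧
      IsPerfectOn G A ∧ omegaOn G B < omegaOn G H

/-- `G` is minimally nonperfectly divisible. -/
def MNPD (G : SimpleGraph V) : Prop :=
  ¬ PerfDivOn G Set.univ ∧ ∀ S : Set V, S ≠ Set.univ → PerfDivOn G S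

/-- The external neighbourhood `N(X)`. -/
def extNbhd (G : SimpleGraph V) (X : Set V) : Set V :=
  {v | v ∉ X ∧ ∃ x ∈ X, G.Adj v x}

/-- `G` has no induced claw (`K_{1,3}`). -/
def ClawFree (G : SimpleGraph V) : Prop :=
  ¬ ∃ a b c d : V, b ≠ c ∧ b ≠ d ∧ c ≠ d ∧
    G.Adj a b ∧ G.Adj a c ∧ G.Adj a d ∧
    ¬ G.Adj b c ∧ ¬ G.Adj b d ∧ ¬ G.Adj c d

/-!
Let `Z` be the set of vertices with no neighbour on the antihole; it contains `v` but no vertex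
of the antihole. A vertex `x` adjacent to the antihole has two cyclically consecutive, hence
nonadjacent, neighbours on it. Otherwise, the antihole being odd, `x` misses two consecutive
vertices `f a`, `f (a + 1)`; claw-freeness confines the neighbours of `x` to `f (a - 1)` and
`f (a + 2)`, and each of these centres a claw with `x` and two consecutive vertices further along.
So an edge `z x` with `z ∈ Z`, `x ∉ Z` would make `x` the centre of a claw. Hence `Z` and its
complement are nonempty and anticomplete, and perfect divisions of the two, which exist by
minimality, combine into one of `G`.
-/

lemma ClawFree.adj_or_adj {G : SimpleGraph V} (h : ClawFree G) {a b c d : V} (hab : G.Adj a b)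
    (hac : G.Adj a c) (had : G.Adj a d) (hbc : b ≠ c) (hbd : b ≠ d) (hcd : c ≠ d)
    (hncd : ¬ G.Adj c d) : G.Adj b c ∨ G.Adj b d := by
  by_contra! hb
  exact h ⟨a, b, c, d, hbc, hbd, hcd, hab, hac, had, hb.1, hb.2, hncd⟩

section Division

variable {G : SimpleGraph V} {S T : Set V}

def Anticomplete (G : SimpleGraph V) (S T : Set V) : Prop :=
  ∀ a ∈ S, ∀ b ∈ T, ¬ G.Adj a b

lemma Anticomplete.mono {S' T' : Set V} (h : Anticomplete G S T) (hS : S' ⊆ S) (hT : T' ⊆ T) :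
    Anticomplete G S' T' :=
  fun a ha b hb => h a (hS ha) b (hT hb)

lemma le_omegaOn [Fintype V] {m : ℕ} {s : Finset V} (hs : ↑s ⊆ S) (h : G.IsNClique m s) :
    m ≤ omegaOn G S :=
  le_csSup ⟨Fintype.card V, fun _ ⟨s, _, hs⟩ => hs.2 ▸ s.card_le_univ⟩ ⟨s, hs, h⟩

lemma omegaOn_le {m : ℕ} (h : ∀ (k : ℕ) (s : Finset V), ↑s ⊆ S → G.IsNClique k s → k ≤ m) :
    omegaOn G S ≤ m :=
  csSup_le ⟨0, ∅, by simp, by simp⟩ fun k ⟨s, hsS, hs⟩ => h k s hsS hs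

lemma omegaOn_mono [Fintype V] (h : S ⊆ T) : omegaOn G S ≤ omegaOn G T :=
  omegaOn_le fun _ _ hsS hs => le_omegaOn (hsS.trans h) hs

lemma omegaOn_union [Fintype V] (h : Anticomplete G S T) :
    omegaOn G (S ∪ T) = max (omegaOn G S) (omegaOn G T) := by
  refine le_antisymm (omegaOn_le fun k s hs hk => ?_)
    (max_le (omegaOn_mono Set.subset_union_left) (omegaOn_mono Set.subset_union_right))
  by_cases hsS : (↑s : Set V) ⊆ S
  · exact le_max_of_le_left (le_omegaOn hsS hk)
  obtain ⟨y, hys, hyS⟩ := Set.not_subset.mp hsS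
  have hyT : y ∈ T := (hs hys).resolve_left hyS
  -- a clique meeting `T` outside `S` lies in `T`, since `S` is anticomplete to `T`
  have hsT : (↑s : Set V) ⊆ T := fun x hxs =>
    (hs hxs).resolve_left fun hxS => h x hxS y hyT (hk.1 hxs hys (ne_of_mem_of_not_mem hxS hyS))
  exact le_max_of_le_right (le_omegaOn hsT hk)

lemma colorable_induce_union (h : Anticomplete G S T) {m : ℕ}
    (hS : (G.induce S).Colorable m) (hT : (G.induce T).Colorable m) :
    (G.induce (S ∪ T)).Colorable m := by
  classical
  obtain ⟨CS⟩ := hS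
  obtain ⟨CT⟩ := hT
  refine ⟨Coloring.mk
    (fun u => if hu : u.1 ∈ S then CS ⟨u.1, hu⟩ else CT ⟨u.1, u.2.resolve_left hu⟩) ?_⟩
  intro a b hab
  have hab' : G.Adj a.1 b.1 := hab
  split_ifs with ha hb hb
  · exact CS.valid (by exact hab')
  · exact absurd hab' (h a.1 ha b.1 (b.2.resolve_left hb))
  · exact absurd hab'.symm (h b.1 hb a.1 (a.2.resolve_left ha))
  · exact CT.valid (by exact hab')

lemma chromaticNumber_induce_mono (h : S ⊆ T) :
    (G.induce S).chromaticNumber ≤ (G.induce T).chromaticNumber :=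
  chromaticNumber_mono_of_hom (G.induceHomOfLE h).toHom

lemma isPerfectOn_union [Fintype V] (h : Anticomplete G S T) (hS : IsPerfectOn G S)
    (hT : IsPerfectOn G T) : IsPerfectOn G (S ∪ T) := by
  intro U hU
  have hU' : U = U ∩ S ∪ U ∩ T := by
    rw [← Set.inter_union_distrib_left, Set.inter_eq_left.mpr hU]
  have hUST : Anticomplete G (U ∩ S) (U ∩ T) := h.mono Set.inter_subset_right Set.inter_subset_right
  have eS := hS (U ∩ S) Set.inter_subset_right
  have eT := hT (U ∩ T) Set.inter_subset_right
  rw [hU', omegaOn_union hUST, Nat.mono_cast.map_max]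
  refine le_antisymm (Colorable.chromaticNumber_le ?_) (max_le ?_ ?_)
  · refine colorable_induce_union hUST (chromaticNumber_le_iff_colorable.mp ?_)
      (chromaticNumber_le_iff_colorable.mp ?_)
    · exact eS ▸ Nat.cast_le.mpr (le_max_left _ _)
    · exact eT ▸ Nat.cast_le.mpr (le_max_right _ _)
  · exact eS ▸ chromaticNumber_induce_mono Set.subset_union_left
  · exact eT ▸ chromaticNumber_induce_mono Set.subset_union_right

lemma PerfDivOn.union [Fintype V] (hS : PerfDivOn G S) (hT : PerfDivOn G T)
    (h : Anticomplete G S T) (hd : Disjoint S T) : PerfDivOn G (S ∪ T) := by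
  intro H hH hne
  rcases (H ∩ T).eq_empty_or_nonempty with hHT | hHT
  · exact hS H (fun x hx => (hH hx).resolve_right fun hxT => hHT.subset ⟨hx, hxT⟩) hne
  rcases (H ∩ S).eq_empty_or_nonempty with hHS | hHS
  · exact hT H (fun x hx => (hH hx).resolve_left fun hxS => hHS.subset ⟨hx, hxS⟩) hne
  obtain ⟨A₁, B₁, hAB₁, hd₁, hA₁, hB₁⟩ := hS (H ∩ S) Set.inter_subset_right hHS
  obtain ⟨A₂, B₂, hAB₂, hd₂, hA₂, hB₂⟩ := hT (H ∩ T) Set.inter_subset_right hHT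
  have hA₁S : A₁ ⊆ S := (hAB₁ ▸ Set.subset_union_left).trans Set.inter_subset_right
  have hB₁S : B₁ ⊆ S := (hAB₁ ▸ Set.subset_union_right).trans Set.inter_subset_right
  have hA₂T : A₂ ⊆ T := (hAB₂ ▸ Set.subset_union_left).trans Set.inter_subset_right
  have hB₂T : B₂ ⊆ T := (hAB₂ ▸ Set.subset_union_right).trans Set.inter_subset_right
  refine ⟨A₁ ∪ A₂, B₁ ∪ B₂, ?_, ?_, isPerfectOn_union (h.mono hA₁S hA₂T) hA₁ hA₂, ?_⟩
  · rw [Set.union_union_union_comm, hAB₁, hAB₂, ← Set.inter_union_distrib_left,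
      Set.inter_eq_left.mpr hH]
  · exact Set.disjoint_union_left.mpr
      ⟨Set.disjoint_union_right.mpr ⟨hd₁, hd.mono hA₁S hB₂T⟩,
        Set.disjoint_union_right.mpr ⟨hd.symm.mono hA₂T hB₁S, hd₂⟩⟩
  · rw [omegaOn_union (h.mono hB₁S hB₂T)]
    exact max_lt (hB₁.trans_le (omegaOn_mono Set.inter_subset_left))
      (hB₂.trans_le (omegaOn_mono Set.inter_subset_left))

lemma MNPD.not_anticomplete_compl [Fintype V] (hG : MNPD G) (hS : S.Nonempty)
    (hS' : S ≠ Set.univ) : ¬ Anticomplete G S Sᶜ := fun h => by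
  have := (hG.2 S hS').union (hG.2 Sᶜ (Set.compl_ne_univ.mpr hS)) h disjoint_compl_right
  exact hG.1 (Set.union_compl_self S ▸ this)

end Division

open Fin.NatCast in
lemma Fin.exists_iff_add_one_of_odd {n : ℕ} [NeZero n] (hn : Odd n) (p : Fin n → Prop) :
    ∃ a, (p a ↔ p (a + 1)) := by
  by_contra h
  simp only [not_exists] at h
  have key : ∀ k : ℕ, (p k ↔ (Even k ↔ p 0)) := by
    intro k
    induction k with
    | zero => simp
    | succ k ih =>
      have := h k
      rw [Nat.cast_succ, Nat.even_add_one]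
      tauto
  have := key n
  rw [Fin.natCast_self] at this
  have := Nat.not_even_iff_odd.mpr hn
  tauto

lemma Fin.add_one_eq_of_val {n : ℕ} [NeZero n] {k l : Fin n} (h : l.val = k.val + 1) :
    k + 1 = l :=
  Fin.ext (by rw [Fin.val_add_one_of_lt' (by omega)]; omega)

section Antihole

variable {G : SimpleGraph V} {n : ℕ} [NeZero n] {f : Fin n → V}

def IsCyclicAntihole (G : SimpleGraph V) (f : Fin n → V) : Prop :=
  Function.Injective f ∧ ∀ i j, G.Adj (f i) (f j) ↔ i ≠ j ∧ i + 1 ≠ j ∧ j + 1 ≠ i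

namespace IsCyclicAntihole

lemma adj_iff (hf : IsCyclicAntihole G f) {i j : Fin n} :
    G.Adj (f i) (f j) ↔ i ≠ j ∧ i + 1 ≠ j ∧ j + 1 ≠ i :=
  hf.2 i j

lemma not_adj_add_one (hf : IsCyclicAntihole G f) (i : Fin n) : ¬ G.Adj (f i) (f (i + 1)) :=
  fun h => (hf.adj_iff.mp h).2.1 rfl

lemma adj_of_val_le (hf : IsCyclicAntihole G f) {i j : Fin n} (hij : i.val + 2 ≤ j.val)
    (hji : j.val + 2 ≤ i.val + n) : G.Adj (f i) (f j) := by
  have h1 : (1 : Fin n).val = 1 := by rw [Fin.val_one', Nat.mod_eq_of_lt (by omega)]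
  refine hf.adj_iff.mpr ⟨fun h => ?_, fun h => ?_, fun h => ?_⟩ <;>
    simp only [Fin.ext_iff, Fin.val_add, h1] at h
  · omega
  · rw [Nat.mod_eq_of_lt (by omega)] at h
    omega
  · rcases Nat.lt_or_ge (j.val + 1) n with hj | hj
    · rw [Nat.mod_eq_of_lt hj] at h
      omega
    · rw [show j.val + 1 = n by omega, Nat.mod_self] at h
      omega

lemma rotate (hf : IsCyclicAntihole G f) (a : Fin n) : IsCyclicAntihole G (fun i => f (a + i)) :=
  ⟨hf.1.comp (add_right_injective a), fun i j => by simp [hf.adj_iff, add_assoc]⟩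

lemma of_adj_iff_mod (hinj : Function.Injective f) (hadj : ∀ i j : Fin n, i ≠ j →
      (G.Adj (f i) (f j) ↔ ¬((i.val + 1) % n = j.val ∨ (j.val + 1) % n = i.val))) :
    IsCyclicAntihole G f := by
  have hmod : ∀ i j : Fin n, (i.val + 1) % n = j.val ↔ i + 1 = j := by
    simp [Fin.ext_iff, Fin.val_add]
  refine ⟨hinj, fun i j => ?_⟩
  rcases eq_or_ne i j with rfl | hij
  · simp
  · rw [hadj i j hij, hmod, hmod]
    tauto

lemma exists_adj_adj_add_one_self (hf : IsCyclicAntihole G f) (hn : 5 ≤ n) (m : Fin n) :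
    ∃ a, G.Adj (f m) (f a) ∧ G.Adj (f m) (f (a + 1)) := by
  obtain ⟨v₀, v₂, v₃⟩ : (0 : Fin n).val = 0 ∧ (2 : Fin n).val = 2 ∧ (3 : Fin n).val = 3 := by
    simp (disch := omega) only [Fin.coe_ofNat_eq_mod, Nat.mod_eq_of_lt, and_self]
  have hg := hf.rotate m
  refine ⟨m + 2, ?_, ?_⟩
  · simpa using hg.adj_of_val_le (i := 0) (j := 2) (by omega) (by omega)
  · rw [add_assoc, Fin.add_one_eq_of_val (k := 2) (l := 3) (by omega)]
    simpa using hg.adj_of_val_le (i := 0) (j := 3) (by omega) (by omega)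

variable (hclaw : ClawFree G) (hf : IsCyclicAntihole G f)
include hclaw hf

lemma adj_or_adj_of_adj (hn : 2 ≤ n) {x y : V} (hx : x ∉ Set.range f) {k l : Fin n}
    (hkl : k + 1 = l) (hyx : G.Adj y x) (hyk : G.Adj y (f k)) (hyl : G.Adj y (f l)) :
    G.Adj x (f k) ∨ G.Adj x (f l) := by
  subst hkl
  have hk : k ≠ k + 1 := fun h => by
    have := Fin.one_eq_zero_iff.mp (add_eq_left.mp h.symm)
    omega
  exact hclaw.adj_or_adj hyx hyk hyl (fun h => hx ⟨k, h.symm⟩) (fun h => hx ⟨k + 1, h.symm⟩)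
    (hf.1.ne hk) (hf.not_adj_add_one k)

lemma adj_one_or_adj_two (hn : 7 ≤ n) {x : V} (hx : x ∉ Set.range f) {j : Fin n}
    (hxj : G.Adj x (f j)) : G.Adj x (f 1) ∨ G.Adj x (f 2) := by
  obtain ⟨v₁, v₂, v₄, v₅, v₆⟩ : (1 : Fin n).val = 1 ∧ (2 : Fin n).val = 2 ∧
      (4 : Fin n).val = 4 ∧ (5 : Fin n).val = 5 ∧ (6 : Fin n).val = 6 := by
    simp (disch := omega) only [Fin.coe_ofNat_eq_mod, Nat.mod_eq_of_lt, and_self]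
  by_contra! h
  obtain ⟨h₁, h₂⟩ := h
  -- a neighbour `f i` of `x` other than `f 0`, `f 3` would centre a claw with `x`, `f 1`, `f 2`
  have hnbr : ∀ i, G.Adj x (f i) → i.val = 0 ∨ i.val = 3 := by
    intro i hi
    by_contra hi'
    have hi₁ : i.val ≠ 1 := fun h => h₁ (Fin.ext (h.trans v₁.symm) ▸ hi)
    have hi₂ : i.val ≠ 2 := fun h => h₂ (Fin.ext (h.trans v₂.symm) ▸ hi)
    have := hf.adj_or_adj_of_adj hclaw (by omega) hx
      (Fin.add_one_eq_of_val (k := 1) (l := 2) (by omega)) hi.symm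
      (G.adj_symm (hf.adj_of_val_le (by omega) (by omega)))
      (G.adj_symm (hf.adj_of_val_le (by omega) (by omega)))
    tauto
  rcases hnbr j hxj with hj | hj
  · rcases hf.adj_or_adj_of_adj hclaw (by omega) hx
      (Fin.add_one_eq_of_val (k := 4) (l := 5) (by omega)) hxj.symm
      (hf.adj_of_val_le (by omega) (by omega)) (hf.adj_of_val_le (by omega) (by omega)) with h | h
      <;> have := hnbr _ h <;> omega
  · rcases hf.adj_or_adj_of_adj hclaw (by omega) hx
      (Fin.add_one_eq_of_val (k := 5) (l := 6) (by omega)) hxj.symm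
      (hf.adj_of_val_le (by omega) (by omega)) (hf.adj_of_val_le (by omega) (by omega)) with h | h
      <;> have := hnbr _ h <;> omega

lemma adj_or_adj_add_one (hn : 7 ≤ n) {x : V} (hx : x ∉ Set.range f) {j : Fin n}
    (hxj : G.Adj x (f j)) (a : Fin n) : G.Adj x (f a) ∨ G.Adj x (f (a + 1)) := by
  have hx' : x ∉ Set.range (fun i => f (a - 1 + i)) := fun ⟨i, hi⟩ => hx ⟨_, hi⟩
  have := (hf.rotate (a - 1)).adj_one_or_adj_two hclaw hn hx' (j := j - (a - 1))
    (by simpa using hxj)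
  have h2 : a - 1 + 2 = a + 1 := by
    obtain ⟨v₁, v₂⟩ : (1 : Fin n).val = 1 ∧ (2 : Fin n).val = 2 := by
      simp (disch := omega) only [Fin.coe_ofNat_eq_mod, Nat.mod_eq_of_lt, and_self]
    rw [← Fin.add_one_eq_of_val (k := 1) (l := 2) (by omega), ← add_assoc, sub_add_cancel]
  simpa [h2] using this

lemma exists_adj_adj_add_one (hn : 7 ≤ n) (hodd : Odd n) {x : V} {j : Fin n}
    (hxj : G.Adj x (f j)) : ∃ a, G.Adj x (f a) ∧ G.Adj x (f (a + 1)) := by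
  by_cases hx : x ∈ Set.range f
  · obtain ⟨m, rfl⟩ := hx
    exact hf.exists_adj_adj_add_one_self (by omega) m
  · -- around an odd cycle, adjacency to `x` cannot alternate
    obtain ⟨a, ha⟩ := Fin.exists_iff_add_one_of_odd hodd (fun i => G.Adj x (f i))
    have := hf.adj_or_adj_add_one hclaw hn hx hxj a
    exact ⟨a, by tauto, by tauto⟩

lemma not_adj_of_adj (hn : 7 ≤ n) (hodd : Odd n) {z x : V} (hz : ∀ i, ¬ G.Adj z (f i))
    (hzx : G.Adj z x) (i : Fin n) : ¬ G.Adj x (f i) := by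
  intro hxi
  obtain ⟨a, ha, ha'⟩ := hf.exists_adj_adj_add_one hclaw hn hodd hxi
  have hz' : z ∉ Set.range f := by
    rintro ⟨m, rfl⟩
    obtain ⟨b, hb, -⟩ := hf.exists_adj_adj_add_one_self (by omega) m
    exact hz b hb
  rcases hf.adj_or_adj_of_adj hclaw (by omega) hz' rfl hzx.symm ha ha' with h | h
  · exact hz a h
  · exact hz (a + 1) h

end IsCyclicAntihole

end Antihole

theorem stmt_14 [Fintype V] (G : SimpleGraph V) (hclaw : ClawFree G)
    (hG : MNPD G) (v : V) :
    ¬ ∃ n : ℕ, 7 ≤ n ∧ Odd n ∧ ∃ f : Fin n → V, Function.Injective f ∧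
      (∀ i : Fin n, f i ≠ v ∧ ¬ G.Adj v (f i)) ∧
      (∀ i j : Fin n, i ≠ j →
        (G.Adj (f i) (f j) ↔ ¬ ((i.val + 1) % n = j.val ∨ (j.val + 1) % n = i.val))) := by
  rintro ⟨n, hn, hodd, f, hinj, hvf, hadj⟩
  have : NeZero n := ⟨by omega⟩
  have hf : IsCyclicAntihole G f := .of_adj_iff_mod hinj hadj
  let Z : Set V := {u | ∀ i, ¬ G.Adj u (f i)}
  have hZ : Z ≠ Set.univ := fun h => by
    obtain ⟨a, ha, -⟩ := hf.exists_adj_adj_add_one_self (by omega) 0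
    exact (h ▸ Set.mem_univ (f 0) : f 0 ∈ Z) a ha
  exact hG.not_anticomplete_compl (S := Z) ⟨v, fun i => (hvf i).2⟩ hZ
    fun z hz x hx hzx => hx (hf.not_adj_of_adj hclaw hn hodd hz hzx)
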